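/- Let S be a distributive subalgebra of RCC5, let Γ be a consistent RCC5 network over S, and let Γ_p = {v_i S_ij v_j} be the a-closure of Γ. Then Γ_p is the minimal network of Γ: for every i ≠ j, S_ij equals the set of basic relations α such that Γ has a solution (a₁,…,aₙ) with (a_i,a_j) ∈ α. -/

import Mathlib

/-- A *region* is a nonempty regular closed subset of the Euclidean plane `ℝ × ℝ`. -/
def Region : Type :=
  {x : Set (ℝ × ℝ) // x.Nonempty ∧ x = closure (interior x)}

namespace Region

/-- Part-of: `x P y` iff `x ⊆ y`. -/
def P (x y : Region) : Prop := x.1 ⊆ y.1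

/-- Overlap: `x O y` iff some region is a common part of `x` and `y`. -/
def O (x y : Region) : Prop := ∃ z : Region, z.1 ⊆ x.1 ∧ z.1 ⊆ y.1

/-- Connection: `x C y` iff `x ∩ y ≠ ∅`. -/
def C (x y : Region) : Prop := (x.1 ∩ y.1).Nonempty

end Region

/-- The five basic RCC5 relations. -/
inductive RCC5Basic : Type
  | DR | PO | PP | PPi | EQ
deriving DecidableEq

namespace RCC5Basic

/-- Interpretation of the basic RCC5 relations on regions. -/
def interp : RCC5Basic → Region → Region → Prop
  | DR, x, y => ¬ Region.O x y
  | PO, x, y => Region.O x y ∧ ¬ x.1 ⊆ y.1 ∧ ¬ y.1 ⊆ x.1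
  | PP, x, y => x.1 ⊆ y.1 ∧ x ≠ y
  | PPi, x, y => y.1 ⊆ x.1 ∧ x ≠ y
  | EQ, x, y => x = y

/-- Converse of a basic RCC5 relation. -/
def conv : RCC5Basic → RCC5Basic
  | DR => DR | PO => PO | PP => PPi | PPi => PP | EQ => EQ

end RCC5Basic

/-- An RCC5 relation is a union of basic relations, identified with a subset of `B₅`. -/
abbrev RCC5Rel : Type := Set RCC5Basic

namespace RCC5Rel

/-- A pair of regions is an instance of an RCC5 relation iff it is an instance of one of
its basic relations. -/
def interp (R : RCC5Rel) (x y : Region) : Prop := ∃ b ∈ R, RCC5Basic.interp b x y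

/-- Converse of an RCC5 relation. -/
def conv (R : RCC5Rel) : RCC5Rel := {b | RCC5Basic.conv b ∈ R}

/-- Weak composition: `γ ∈ R ⋄ S` iff `γ` intersects the relational composition `R ∘ S`. -/
def comp (R S : RCC5Rel) : RCC5Rel :=
  {γ | ∃ x z : Region, RCC5Basic.interp γ x z ∧
        ∃ y : Region, RCC5Rel.interp R x y ∧ RCC5Rel.interp S y z}

lemma conv_univ : RCC5Rel.conv Set.univ = Set.univ := by
  ext b; simp [RCC5Rel.conv]

end RCC5Rel

/-- A distributive subalgebra of RCC5: contains all basic relations, is closed under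
converse, weak composition and (nonempty) intersection, and weak composition distributes
over nonempty intersections. -/
def IsDistributiveSubalgebra (𝒮 : Set RCC5Rel) : Prop :=
  (∀ b : RCC5Basic, ({b} : RCC5Rel) ∈ 𝒮) ∧
  (∀ R ∈ 𝒮, RCC5Rel.conv R ∈ 𝒮) ∧
  (∀ R ∈ 𝒮, ∀ S ∈ 𝒮, RCC5Rel.comp R S ∈ 𝒮) ∧
  (∀ R ∈ 𝒮, ∀ S ∈ 𝒮, (R ∩ S).Nonempty → R ∩ S ∈ 𝒮) ∧
  (∀ R ∈ 𝒮, ∀ T₁ ∈ 𝒮, ∀ T₂ ∈ 𝒮, (T₁ ∩ T₂).Nonempty →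
    RCC5Rel.comp R (T₁ ∩ T₂) = RCC5Rel.comp R T₁ ∩ RCC5Rel.comp R T₂ ∧
    RCC5Rel.comp (T₁ ∩ T₂) R = RCC5Rel.comp T₁ R ∩ RCC5Rel.comp T₂ R)

/-- An RCC5 (constraint) network on `n` variables. -/
structure RCC5Network (n : ℕ) where
  rel : Fin n → Fin n → RCC5Rel
  conv_rel : ∀ i j, rel j i = RCC5Rel.conv (rel i j)
  diag : ∀ i, rel i i = {RCC5Basic.EQ}

namespace RCC5Network

variable {n : ℕ}

/-- A solution of a network assigns regions to the variables satisfying all constraints. -/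
def IsSolution (Γ : RCC5Network n) (a : Fin n → Region) : Prop :=
  ∀ i j, RCC5Rel.interp (Γ.rel i j) (a i) (a j)

/-- A network is consistent if it has a solution. -/
def Consistent (Γ : RCC5Network n) : Prop := ∃ a, Γ.IsSolution a

/-- `Γ` entails the constraint `(v_i S v_j)`. -/
def Entails (Γ : RCC5Network n) (i j : Fin n) (S : RCC5Rel) : Prop :=
  ∀ a, Γ.IsSolution a → RCC5Rel.interp S (a i) (a j)

/-- All-different: consistent and no two distinct variables are forced to be equal. -/
def AllDifferent (Γ : RCC5Network n) : Prop :=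
  Γ.Consistent ∧ ∀ i j, i ≠ j → ¬ Γ.Entails i j {RCC5Basic.EQ}

/-- Path-consistency. -/
def PathConsistent (Γ : RCC5Network n) : Prop :=
  ∀ i j k, (Γ.rel i j).Nonempty ∧ Γ.rel i j ⊆ RCC5Rel.comp (Γ.rel i k) (Γ.rel k j)

/-- The network is over the subclass `𝒮`. -/
def Over (Γ : RCC5Network n) (𝒮 : Set RCC5Rel) : Prop := ∀ i j, Γ.rel i j ∈ 𝒮

/-- `Γ'` refines `Γ`. -/
def Refines (Γ' Γ : RCC5Network n) : Prop := ∀ i j, Γ'.rel i j ⊆ Γ.rel i j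

/-- `Γp` is the a-closure of `Γ`: the pointwise-largest path-consistent refinement. -/
def IsAClosure (Γp Γ : RCC5Network n) : Prop :=
  Γp.PathConsistent ∧ Γp.Refines Γ ∧
    ∀ Γ' : RCC5Network n, Γ'.PathConsistent → Γ'.Refines Γ → Γ'.Refines Γp

/-- A scenario of (the restriction of) `Γ` on the variable set `V`. -/
def IsScenarioOn (Γ : RCC5Network n) (V : Set (Fin n)) (s : Fin n → Fin n → RCC5Basic) : Prop :=
  (∀ i ∈ V, ∀ j ∈ V, s i j ∈ Γ.rel i j) ∧
  (∀ i ∈ V, ∀ j ∈ V, s j i = RCC5Basic.conv (s i j)) ∧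
  (∀ i ∈ V, s i i = RCC5Basic.EQ)

/-- Consistency of a scenario on a variable set `V`. -/
def ScenarioConsistentOn (V : Set (Fin n)) (s : Fin n → Fin n → RCC5Basic) : Prop :=
  ∃ a : Fin n → Region, ∀ i ∈ V, ∀ j ∈ V, RCC5Basic.interp (s i j) (a i) (a j)

/-- Weakly globally consistent: every consistent scenario of a restriction of `Γ` extends
to a consistent scenario of `Γ`. -/
def WeaklyGloballyConsistent (Γ : RCC5Network n) : Prop :=
  ∀ V : Set (Fin n), V.Nonempty → ∀ s, Γ.IsScenarioOn V s → ScenarioConsistentOn V s →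
    ∃ s', Γ.IsScenarioOn Set.univ s' ∧ ScenarioConsistentOn Set.univ s' ∧
      ∀ i ∈ V, ∀ j ∈ V, s' i j = s i j

/-- Minimality: every basic relation in every constraint is feasible. -/
def Minimal (Γ : RCC5Network n) : Prop :=
  ∀ i j, i ≠ j → ∀ α ∈ Γ.rel i j,
    ∃ a, Γ.IsSolution a ∧ RCC5Basic.interp α (a i) (a j)

/-- Weak composition `CT` along a path `u :: l` of variables. -/
def pathCT (Γ : RCC5Network n) : Fin n → List (Fin n) → RCC5Rel
  | _, [] => Set.univ
  | u, [v] => Γ.rel u v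
  | u, v :: w :: rest => RCC5Rel.comp (Γ.rel u v) (pathCT Γ v (w :: rest))

/-- The network obtained from `Γ` by replacing the constraints between `v_i` and `v_j`
(`i ≠ j`) by the universal relation. -/
def removeEdge (Γ : RCC5Network n) (i j : Fin n) : RCC5Network n where
  rel a b := if i ≠ j ∧ ((a = i ∧ b = j) ∨ (a = j ∧ b = i)) then Set.univ else Γ.rel a b
  conv_rel a b := by
    by_cases h : i ≠ j ∧ ((a = i ∧ b = j) ∨ (a = j ∧ b = i))
    · have h' : i ≠ j ∧ ((b = i ∧ a = j) ∨ (b = j ∧ a = i)) := by tauto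
      simp only [if_pos h, if_pos h', RCC5Rel.conv_univ]
    · have h' : ¬(i ≠ j ∧ ((b = i ∧ a = j) ∨ (b = j ∧ a = i))) := by tauto
      simp only [if_neg h, if_neg h']
      exact Γ.conv_rel a b
  diag a := by
    have h : ¬(i ≠ j ∧ ((a = i ∧ a = j) ∨ (a = j ∧ a = i))) := by
      rintro ⟨hij, ⟨h1, h2⟩ | ⟨h1, h2⟩⟩
      · exact hij (h1.symm.trans h2)
      · exact hij (h2.symm.trans h1)
    simp only [if_neg h]
    exact Γ.diag a

/-- A constraint `(v_i R_ij v_j)` is redundant in `Γ` if the network obtained by replacing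
it (and its converse) with the universal relation entails it. -/
def Redundant (Γ : RCC5Network n) (i j : Fin n) : Prop :=
  (Γ.removeEdge i j).Entails i j (Γ.rel i j)

open Classical in
/-- The core of `Γ`: every redundant constraint (and its converse) is replaced by the
universal relation. -/
noncomputable def core (Γ : RCC5Network n) : RCC5Network n where
  rel a b := if a ≠ b ∧ (Γ.Redundant a b ∨ Γ.Redundant b a) then Set.univ else Γ.rel a b
  conv_rel a b := by
    by_cases h : a ≠ b ∧ (Γ.Redundant a b ∨ Γ.Redundant b a)
    · have h' : b ≠ a ∧ (Γ.Redundant b a ∨ Γ.Redundant a b) := ⟨h.1.symm, h.2.symm⟩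
      simp only [if_pos h, if_pos h', RCC5Rel.conv_univ]
    · have h' : ¬(b ≠ a ∧ (Γ.Redundant b a ∨ Γ.Redundant a b)) := by
        intro hc; exact h ⟨hc.1.symm, hc.2.symm⟩
      simp only [if_neg h, if_neg h']
      exact Γ.conv_rel a b
  diag a := by
    have h : ¬(a ≠ a ∧ (Γ.Redundant a a ∨ Γ.Redundant a a)) := fun hc => hc.1 rfl
    simp only [if_neg h]
    exact Γ.diag a

end RCC5Network

/-- A path from `i` to `j` in a network on `n` variables: a nonempty list `l` of successive
vertices (so the path is `i :: l`), with consecutive vertices distinct, ending at `j`. -/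
def IsPathFrom {n : ℕ} (i j : Fin n) (l : List (Fin n)) : Prop :=
  l ≠ [] ∧ l.getLast? = some j ∧ List.Chain (· ≠ ·) i l

/-- The path `u :: l` never traverses the edge `{i, j}` (in either direction). -/
def AvoidsEdge {n : ℕ} (i j : Fin n) (u : Fin n) (l : List (Fin n)) : Prop :=
  List.Chain (fun a b => ¬(a = i ∧ b = j) ∧ ¬(a = j ∧ b = i)) u l

set_option linter.unusedSectionVars false
set_option linter.unnecessarySeqFocus false
set_option maxHeartbeats 1000000
open Set

namespace Aux
open RCC5Basic


open Set

lemma region_interior_nonempty (x : Region) : (interior x.1).Nonempty := by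
  rcases x with ⟨s, hne, hreg⟩
  by_contra h
  rw [not_nonempty_iff_eq_empty] at h
  rw [h, closure_empty] at hreg
  exact hne.ne_empty hreg

lemma O_of_subset {x y : Region} (h : x.1 ⊆ y.1) : Region.O x y :=
  ⟨x, subset_rfl, h⟩

lemma O_symm {x y : Region} (h : Region.O x y) : Region.O y x := by
  obtain ⟨z, h1, h2⟩ := h; exact ⟨z, h2, h1⟩

lemma O_mono {x y x' y' : Region} (h : Region.O x y) (hx : x.1 ⊆ x'.1) (hy : y.1 ⊆ y'.1) :
    Region.O x' y' := by
  obtain ⟨z, h1, h2⟩ := h; exact ⟨z, h1.trans hx, h2.trans hy⟩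

/-- the basic square region -/
noncomputable def sq (m : ℕ) : Set (ℝ × ℝ) := Icc (3*m : ℝ) (3*m+1) ×ˢ Icc (0:ℝ) 1

lemma sq_nonempty (m : ℕ) : (sq m).Nonempty := by
  refine ⟨(3*m, 0), ?_, ?_⟩ <;> constructor <;> norm_num

lemma sq_regular (m : ℕ) : sq m = closure (interior (sq m)) := by
  have h1 : (3*m : ℝ) ≠ 3*m+1 := by norm_num
  have h2 : (0:ℝ) ≠ 1 := by norm_num
  rw [sq, interior_prod_eq, interior_Icc, interior_Icc, closure_prod_eq,
    closure_Ioo h1, closure_Ioo h2]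

lemma sq_disjoint {m m' : ℕ} (h : m ≠ m') : sq m ∩ sq m' = ∅ := by
  ext ⟨p, q⟩
  simp only [sq, Set.mem_inter_iff, Set.mem_prod, Set.mem_Icc, Set.mem_empty_iff_false,
    iff_false]
  rintro ⟨⟨h1, h2⟩, ⟨h3, h4⟩⟩
  rcases lt_or_gt_of_ne h with hlt | hlt
  · have : (3*m : ℝ) + 1 < 3*m' := by
      have : (m:ℝ) + 1 ≤ m' := by exact_mod_cast hlt
      nlinarith
    linarith [h1.1, h1.2, h3.1]
  · have : (3*m' : ℝ) + 1 < 3*m := by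
      have : (m':ℝ) + 1 ≤ m := by exact_mod_cast hlt
      nlinarith
    linarith [h1.1, h3.1, h3.2]

noncomputable def sqR (m : ℕ) : Region := ⟨sq m, sq_nonempty m, sq_regular m⟩


lemma region_eq {x y : Region} (h1 : x.1 ⊆ y.1) (h2 : y.1 ⊆ x.1) : x = y :=
  Subtype.ext (subset_antisymm h1 h2)

section SetModel
variable {ι : Type} [DecidableEq ι] (e : ι → ℕ)

noncomputable def uSet (X : Finset ι) : Set (ℝ × ℝ) := ⋃ t ∈ X, sq (e t)

lemma uSet_nonempty {X : Finset ι} (hX : X.Nonempty) : (uSet e X).Nonempty := by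
  obtain ⟨t, ht⟩ := hX
  obtain ⟨p, hp⟩ := sq_nonempty (e t)
  exact ⟨p, mem_biUnion ht hp⟩

lemma uSet_closed (X : Finset ι) : IsClosed (uSet e X) := by
  apply Set.Finite.isClosed_biUnion (X.finite_toSet)
  intro t _
  rw [sq_regular (e t)]
  exact isClosed_closure

lemma uSet_regular (X : Finset ι) : uSet e X = closure (interior (uSet e X)) := by
  apply subset_antisymm
  · intro p hp
    rw [uSet, mem_iUnion₂] at hp
    obtain ⟨t, ht, hpt⟩ := hp
    have h1 : sq (e t) ⊆ closure (interior (uSet e X)) := by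
      rw [sq_regular (e t)]
      apply closure_mono
      apply interior_mono
      exact subset_biUnion_of_mem (u := fun t => sq (e t)) ht
    exact h1 hpt
  · exact (closure_mono interior_subset).trans (uSet_closed e X).closure_eq.subset

noncomputable def uReg (X : Finset ι) (hX : X.Nonempty) : Region :=
  ⟨uSet e X, uSet_nonempty e hX, uSet_regular e X⟩

variable (he : Function.Injective e)
include he

lemma uSet_subset_iff {X Y : Finset ι} :
    uSet e X ⊆ uSet e Y ↔ X ⊆ Y := by
  constructor
  · intro h t ht
    obtain ⟨p, hp⟩ := sq_nonempty (e t)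
    have := h (mem_biUnion ht hp)
    rw [uSet, mem_iUnion₂] at this
    obtain ⟨t', ht', hpt'⟩ := this
    have : t = t' := by
      by_contra hne
      have := sq_disjoint (fun hc => hne (he hc))
      exact absurd (Set.mem_inter hp hpt') (by rw [this]; exact fun h => h)
    rwa [this]
  · intro h
    exact Set.biUnion_subset_biUnion_left h

lemma uSet_inj {X Y : Finset ι} (h : uSet e X = uSet e Y) : X = Y := by
  apply Finset.Subset.antisymm
  · exact (uSet_subset_iff e he).1 h.le
  · exact (uSet_subset_iff e he).1 h.ge

lemma uSet_overlap_iff {X Y : Finset ι} (hX : X.Nonempty) (hY : Y.Nonempty) :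
    Region.O (uReg e X hX) (uReg e Y hY) ↔ (X ∩ Y).Nonempty := by
  constructor
  · rintro ⟨z, hzX, hzY⟩
    obtain ⟨p, hp⟩ := z.2.1
    have h1 := hzX hp
    have h2 := hzY hp
    rw [uReg] at h1 h2
    simp only [uSet, mem_iUnion₂] at h1 h2
    obtain ⟨t, ht, hpt⟩ := h1
    obtain ⟨t', ht', hpt'⟩ := h2
    have : t = t' := by
      by_contra hne
      have := sq_disjoint (fun hc => hne (he hc))
      exact absurd (Set.mem_inter hpt hpt') (by rw [this]; exact fun h => h)
    exact ⟨t, Finset.mem_inter.2 ⟨ht, this ▸ ht'⟩⟩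
  · rintro ⟨t, ht⟩
    rw [Finset.mem_inter] at ht
    refine ⟨sqR (e t), ?_, ?_⟩
    · exact subset_biUnion_of_mem (u := fun t => sq (e t)) ht.1
    · exact subset_biUnion_of_mem (u := fun t => sq (e t)) ht.2


end SetModel

/-- the RCC5 composition table, as a Boolean predicate -/
def tmem : RCC5Basic → RCC5Basic → RCC5Basic → Bool
  | DR, DR, _ => true
  | DR, PO, c => c = DR ∨ c = PO ∨ c = PP
  | DR, PP, c => c = DR ∨ c = PO ∨ c = PP
  | DR, PPi, c => c = DR
  | DR, EQ, c => c = DR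
  | PO, DR, c => c = DR ∨ c = PO ∨ c = PPi
  | PO, PO, _ => true
  | PO, PP, c => c = PO ∨ c = PP
  | PO, PPi, c => c = DR ∨ c = PO ∨ c = PPi
  | PO, EQ, c => c = PO
  | PP, DR, c => c = DR
  | PP, PO, c => c = DR ∨ c = PO ∨ c = PP
  | PP, PP, c => c = PP
  | PP, PPi, _ => true
  | PP, EQ, c => c = PP
  | PPi, DR, c => c = DR ∨ c = PO ∨ c = PPi
  | PPi, PO, c => c = PO ∨ c = PPi
  | PPi, PP, c => c = PO ∨ c = PP ∨ c = PPi ∨ c = EQ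
  | PPi, PPi, c => c = PPi
  | PPi, EQ, c => c = PPi
  | EQ, b, c => c = b


lemma interp_unique {b c : RCC5Basic} {x y : Region}
    (hb : RCC5Basic.interp b x y) (hc : RCC5Basic.interp c x y) : b = c := by
  cases b <;> cases c <;> try rfl
  all_goals exfalso
  case DR.PO => exact hb hc.1
  case DR.PP => exact hb (O_of_subset hc.1)
  case DR.PPi => exact hb (O_symm (O_of_subset hc.1))
  case DR.EQ => have h : x = y := hc; subst h; exact hb (O_of_subset subset_rfl)
  case PO.DR => exact hc hb.1
  case PO.PP => exact hb.2.1 hc.1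
  case PO.PPi => exact hb.2.2 hc.1
  case PO.EQ => have h : x = y := hc; subst h; exact hb.2.1 subset_rfl
  case PP.DR => exact hc (O_of_subset hb.1)
  case PP.PO => exact hc.2.1 hb.1
  case PP.PPi => exact hb.2 (region_eq hb.1 hc.1)
  case PP.EQ => exact hb.2 hc
  case PPi.DR => exact hc (O_symm (O_of_subset hb.1))
  case PPi.PO => exact hc.2.2 hb.1
  case PPi.PP => exact hb.2 (region_eq hc.1 hb.1)
  case PPi.EQ => exact hb.2 hc
  case EQ.DR => have h : x = y := hb; subst h; exact hc (O_of_subset subset_rfl)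
  case EQ.PO => have h : x = y := hb; subst h; exact hc.2.1 subset_rfl
  case EQ.PP => exact hc.2 hb
  case EQ.PPi => exact hc.2 hb

lemma interp_O {b : RCC5Basic} {x y : Region} (h : RCC5Basic.interp b x y) (hb : b ≠ RCC5Basic.DR) :
    Region.O x y := by
  cases b with
  | DR => exact absurd rfl hb
  | PO => exact h.1
  | PP => exact O_of_subset h.1
  | PPi => exact O_symm (O_of_subset h.1)
  | EQ => have h : x = y := h; subst h; exact O_of_subset subset_rfl

theorem table_sound {a b c : RCC5Basic} {x y z : Region}
    (hab : RCC5Basic.interp a x y) (hbc : RCC5Basic.interp b y z) (hac : RCC5Basic.interp c x z) :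
    tmem a b c = true := by
  cases a with
  | EQ =>
    have h : x = y := hab; subst h
    have h2 : c = b := interp_unique hac hbc
    subst h2; cases c <;> simp [tmem]
  | DR =>
    cases b with
    | EQ =>
      have h : y = z := hbc; subst h
      have h2 : c = RCC5Basic.DR := interp_unique hac hab
      subst h2; simp [tmem]
    | DR => simp [tmem]
    | PO =>
      cases c <;> simp [tmem] <;> exfalso <;> apply hab
      · exact O_symm (O_mono hbc.1 subset_rfl hac.1)
      · have h : x = z := hac; subst h; exact O_symm hbc.1
    | PP =>
      cases c <;> simp [tmem] <;> exfalso <;> apply hab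
      · exact O_symm (O_of_subset (hbc.1.trans hac.1))
      · have h : x = z := hac; subst h; exact O_symm (O_of_subset hbc.1)
    | PPi =>
      cases c <;> simp [tmem] <;> exfalso <;> apply hab
      · exact O_mono hac.1 subset_rfl hbc.1
      · exact O_mono (O_of_subset hac.1) subset_rfl hbc.1
      · exact ⟨z, hac.1, hbc.1⟩
      · have h : x = z := hac; subst h; exact O_of_subset hbc.1
  | PO =>
    cases b with
    | EQ =>
      have h : y = z := hbc; subst h
      have h2 : c = RCC5Basic.PO := interp_unique hac hab
      subst h2; simp [tmem]
    | PO => simp [tmem]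
    | DR =>
      cases c <;> simp [tmem] <;> exfalso <;> apply hbc
      · exact O_mono (O_symm hab.1) subset_rfl hac.1
      · have h : x = z := hac; subst h; exact O_symm hab.1
    | PP =>
      cases c <;> simp [tmem] <;> exfalso
      · exact hac (O_mono hab.1 subset_rfl hbc.1)
      · exact hab.2.2 (hbc.1.trans hac.1)
      · have h : x = z := hac; subst h; exact hab.2.2 hbc.1
    | PPi =>
      cases c <;> simp [tmem] <;> exfalso <;> apply hab.2.1
      · exact hac.1.trans hbc.1
      · have h : x = z := hac; subst h; exact hbc.1
  | PP =>
    cases b with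
    | EQ =>
      have h : y = z := hbc; subst h
      have h2 : c = RCC5Basic.PP := interp_unique hac hab
      subst h2; simp [tmem]
    | DR =>
      cases c <;> simp [tmem] <;>
        exact hbc (O_symm (O_mono (O_symm (interp_O hac (by simp))) subset_rfl hab.1))
    | PO =>
      cases c <;> simp [tmem] <;> exfalso <;> apply hbc.2.2
      · exact hac.1.trans hab.1
      · have h : x = z := hac; subst h; exact hab.1
    | PP =>
      have h1 : x.1 ⊆ z.1 := hab.1.trans hbc.1
      have h2 : x ≠ z := by
        intro he; subst he
        exact hab.2 (region_eq hab.1 hbc.1)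
      cases c <;> simp [tmem] <;> exfalso
      · exact hac (O_of_subset h1)
      · exact hac.2.1 h1
      · exact h2 (region_eq h1 hac.1)
      · exact h2 hac
    | PPi => simp [tmem]
  | PPi =>
    cases b with
    | EQ =>
      have h : y = z := hbc; subst h
      have h2 : c = RCC5Basic.PPi := interp_unique hac hab
      subst h2; simp [tmem]
    | DR =>
      cases c <;> simp [tmem] <;> exfalso <;> apply hbc
      · exact O_of_subset (hab.1.trans hac.1)
      · have h : x = z := hac; subst h; exact O_of_subset hab.1
    | PO =>
      cases c <;> simp [tmem] <;> exfalso
      · exact hac (O_mono hbc.1 hab.1 subset_rfl)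
      · exact hbc.2.1 (hab.1.trans hac.1)
      · have h : x = z := hac; subst h; exact hbc.2.1 hab.1
    | PP =>
      cases c <;> simp [tmem] <;>
        exact hac ⟨y, hab.1, hbc.1⟩
    | PPi =>
      have h1 : z.1 ⊆ x.1 := hbc.1.trans hab.1
      have h2 : x ≠ z := by
        intro he; subst he
        exact hab.2 (region_eq hbc.1 hab.1)
      cases c <;> simp [tmem] <;> exfalso
      · exact hac (O_symm (O_of_subset h1))
      · exact hac.2.2 h1
      · exact h2 (region_eq hac.1 h1)
      · exact h2 hac


/-! ### the finite set model: witnesses for the composition table -/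

def setRel {ι : Type} [DecidableEq ι] (X Y : Finset ι) : RCC5Basic :=
  if X = Y then RCC5Basic.EQ else if X ⊆ Y then RCC5Basic.PP
  else if Y ⊆ X then RCC5Basic.PPi
  else if (X ∩ Y).Nonempty then RCC5Basic.PO else RCC5Basic.DR

section SetModel2

variable {ι : Type} [DecidableEq ι] (e : ι → ℕ) (he : Function.Injective e)
include he

lemma interp_setRel (X Y : Finset ι) (hX : X.Nonempty) (hY : Y.Nonempty) :
    RCC5Basic.interp (setRel X Y) (uReg e X hX) (uReg e Y hY) := by
  have hne : ∀ {A B : Finset ι} (hA : A.Nonempty) (hB : B.Nonempty),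
      A ≠ B → uReg e A hA ≠ uReg e B hB := by
    intro A B hA hB hAB hc
    exact hAB (uSet_inj e he (congrArg Subtype.val hc))
  unfold setRel
  split_ifs with h1 h2 h3 h4
  · subst h1; exact Subtype.ext rfl
  · exact ⟨(uSet_subset_iff e he).2 h2, hne hX hY h1⟩
  · exact ⟨(uSet_subset_iff e he).2 h3, hne hX hY h1⟩
  · refine ⟨(uSet_overlap_iff e he hX hY).2 h4, ?_, ?_⟩
    · intro hc; exact h2 ((uSet_subset_iff e he).1 hc)
    · intro hc; exact h3 ((uSet_subset_iff e he).1 hc)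
  · intro hc
    rw [uSet_overlap_iff e he hX hY] at hc
    exact h4 hc

end SetModel2

instance : Fintype RCC5Basic :=
  ⟨⟨[RCC5Basic.DR, RCC5Basic.PO, RCC5Basic.PP, RCC5Basic.PPi, RCC5Basic.EQ], by decide⟩,
    fun x => by cases x <;> decide⟩

/-- witness existence in the finite set model, decidable -/
def SW (a b g : RCC5Basic) : Prop :=
  ∃ X Y Z : Finset (Fin 4), X.Nonempty ∧ Y.Nonempty ∧ Z.Nonempty ∧
    setRel X Y = a ∧ setRel Y Z = b ∧ setRel X Z = g

instance (a b g : RCC5Basic) : Decidable (SW a b g) := by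
  unfold SW; infer_instance

lemma table_complete : ∀ a b g : RCC5Basic, tmem a b g = true → SW a b g := by decide

lemma exists_realization {a b g : RCC5Basic} (h : tmem a b g = true) :
    ∃ x y z : Region, RCC5Basic.interp a x y ∧ RCC5Basic.interp b y z ∧
      RCC5Basic.interp g x z := by
  obtain ⟨X, Y, Z, hX, hY, hZ, ha, hb, hg⟩ := table_complete a b g h
  have hinj : Function.Injective (fun i : Fin 4 => (i : ℕ)) := fun i j hij => Fin.ext hij
  exact ⟨uReg _ X hX, uReg _ Y hY, uReg _ Z hZ,
    ha ▸ interp_setRel _ hinj X Y hX hY, hb ▸ interp_setRel _ hinj Y Z hY hZ,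
    hg ▸ interp_setRel _ hinj X Z hX hZ⟩

/-! ### relOf and the characterization of weak composition -/

open Classical in
noncomputable def relOf (x y : Region) : RCC5Basic :=
  if x = y then RCC5Basic.EQ else if x.1 ⊆ y.1 then RCC5Basic.PP
  else if y.1 ⊆ x.1 then RCC5Basic.PPi
  else if Region.O x y then RCC5Basic.PO else RCC5Basic.DR

lemma interp_relOf (x y : Region) : RCC5Basic.interp (relOf x y) x y := by
  unfold relOf
  split_ifs with h1 h2 h3 h4
  · exact h1
  · exact ⟨h2, h1⟩
  · exact ⟨h3, h1⟩
  · exact ⟨h4, h2, h3⟩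
  · exact h4

lemma relOf_eq {b : RCC5Basic} {x y : Region} (h : RCC5Basic.interp b x y) :
    relOf x y = b :=
  interp_unique (interp_relOf x y) h

lemma interp_conv {b : RCC5Basic} {x y : Region} (h : RCC5Basic.interp b x y) :
    RCC5Basic.interp (RCC5Basic.conv b) y x := by
  cases b with
  | DR => exact fun hO => h (O_symm hO)
  | PO => exact ⟨O_symm h.1, h.2.2, h.2.1⟩
  | PP => exact ⟨h.1, Ne.symm h.2⟩
  | PPi => exact ⟨h.1, Ne.symm h.2⟩
  | EQ => exact (show x = y from h).symm

lemma relInterp_iff {R : RCC5Rel} {x y : Region} :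
    RCC5Rel.interp R x y ↔ relOf x y ∈ R := by
  constructor
  · rintro ⟨b, hb, hi⟩; rw [relOf_eq hi]; exact hb
  · intro h; exact ⟨relOf x y, h, interp_relOf x y⟩

lemma comp_mem_iff {R S : RCC5Rel} {g : RCC5Basic} :
    g ∈ RCC5Rel.comp R S ↔ ∃ a ∈ R, ∃ b ∈ S, tmem a b g = true := by
  constructor
  · rintro ⟨x, z, hg, y, hR, hS⟩
    obtain ⟨a, haR, hax⟩ := hR
    obtain ⟨b, hbS, hby⟩ := hS
    exact ⟨a, haR, b, hbS, table_sound hax hby hg⟩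
  · rintro ⟨a, haR, b, hbS, ht⟩
    obtain ⟨x, y, z, h1, h2, h3⟩ := exists_realization ht
    exact ⟨x, z, h3, y, ⟨a, haR, h1⟩, ⟨b, hbS, h2⟩⟩


/-! ### atom-level facts by `decide`, and set-level composition lemmas -/

lemma t_assoc : ∀ a b c g : RCC5Basic,
    (∃ d, tmem a b d = true ∧ tmem d c g = true) ↔
    (∃ e, tmem b c e = true ∧ tmem a e g = true) := by decide

lemma t_rot1 : ∀ a b c : RCC5Basic, tmem a b c = true →
    tmem (RCC5Basic.conv a) c b = true := by decide

lemma t_rot2 : ∀ a b c : RCC5Basic, tmem a b c = true →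
    tmem c (RCC5Basic.conv b) a = true := by decide

lemma t_conv : ∀ a b c : RCC5Basic, tmem a b c = true →
    tmem (RCC5Basic.conv b) (RCC5Basic.conv a) (RCC5Basic.conv c) = true := by decide

lemma t_unit_left : ∀ b c : RCC5Basic, tmem RCC5Basic.EQ b c = true ↔ c = b := by decide

lemma t_unit_right : ∀ b c : RCC5Basic, tmem b RCC5Basic.EQ c = true ↔ c = b := by decide

lemma t_circ : ∀ a : RCC5Basic, tmem (RCC5Basic.conv a) a RCC5Basic.EQ = true := by decide

lemma t_circ' : ∀ a : RCC5Basic, tmem a (RCC5Basic.conv a) RCC5Basic.EQ = true := by decide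

lemma t_refine : ∀ b : RCC5Basic, ∃ d, tmem (RCC5Basic.conv b) b d = true ∧
    tmem b d b = true := by decide

lemma conv_conv : ∀ b : RCC5Basic, RCC5Basic.conv (RCC5Basic.conv b) = b := by decide

lemma mem_conv {R : RCC5Rel} {b : RCC5Basic} : b ∈ RCC5Rel.conv R ↔ RCC5Basic.conv b ∈ R :=
  Iff.rfl

lemma conv_conv_rel (R : RCC5Rel) : RCC5Rel.conv (RCC5Rel.conv R) = R := by
  ext b; rw [mem_conv, mem_conv, conv_conv]

lemma conv_inter (R S : RCC5Rel) :
    RCC5Rel.conv (R ∩ S) = RCC5Rel.conv R ∩ RCC5Rel.conv S := rfl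

lemma conv_mono {R S : RCC5Rel} (h : R ⊆ S) : RCC5Rel.conv R ⊆ RCC5Rel.conv S :=
  fun _ hb => h hb

lemma conv_singleton (b : RCC5Basic) :
    RCC5Rel.conv {b} = ({RCC5Basic.conv b} : RCC5Rel) := by
  ext c
  rw [mem_conv]
  constructor
  · intro h; have : RCC5Basic.conv c = b := h
    rw [← conv_conv c, this]; rfl
  · intro h; have : c = RCC5Basic.conv b := h
    rw [this]; show RCC5Basic.conv _ ∈ _; rw [conv_conv]; rfl

lemma conv_nonempty {R : RCC5Rel} (h : R.Nonempty) : (RCC5Rel.conv R).Nonempty := by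
  obtain ⟨b, hb⟩ := h
  exact ⟨RCC5Basic.conv b, by rw [mem_conv, conv_conv]; exact hb⟩

lemma comp_mono {R R' S S' : RCC5Rel} (hR : R ⊆ R') (hS : S ⊆ S') :
    RCC5Rel.comp R S ⊆ RCC5Rel.comp R' S' := by
  intro g hg
  rw [comp_mem_iff] at hg ⊢
  obtain ⟨a, ha, b, hb, ht⟩ := hg
  exact ⟨a, hR ha, b, hS hb, ht⟩

lemma comp_assoc (R S W : RCC5Rel) :
    RCC5Rel.comp (RCC5Rel.comp R S) W = RCC5Rel.comp R (RCC5Rel.comp S W) := by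
  ext g
  rw [comp_mem_iff, comp_mem_iff]
  constructor
  · rintro ⟨d, hd, c, hc, ht⟩
    rw [comp_mem_iff] at hd
    obtain ⟨a, ha, b, hb, ht2⟩ := hd
    obtain ⟨e, he1, he2⟩ := (t_assoc a b c g).1 ⟨d, ht2, ht⟩
    exact ⟨a, ha, e, comp_mem_iff.2 ⟨b, hb, c, hc, he1⟩, he2⟩
  · rintro ⟨a, ha, e, he, ht⟩
    rw [comp_mem_iff] at he
    obtain ⟨b, hb, c, hc, ht2⟩ := he
    obtain ⟨d, hd1, hd2⟩ := (t_assoc a b c g).2 ⟨e, ht2, ht⟩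
    exact ⟨d, comp_mem_iff.2 ⟨a, ha, b, hb, hd1⟩, c, hc, hd2⟩

lemma comp_EQ_left (R : RCC5Rel) : RCC5Rel.comp {RCC5Basic.EQ} R = R := by
  ext g
  rw [comp_mem_iff]
  constructor
  · rintro ⟨a, ha, b, hb, ht⟩
    have : a = RCC5Basic.EQ := ha
    subst this
    rwa [(t_unit_left b g).1 ht]
  · intro hg
    exact ⟨RCC5Basic.EQ, rfl, g, hg, (t_unit_left g g).2 rfl⟩

lemma comp_EQ_right (R : RCC5Rel) : RCC5Rel.comp R {RCC5Basic.EQ} = R := by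
  ext g
  rw [comp_mem_iff]
  constructor
  · rintro ⟨a, ha, b, hb, ht⟩
    have : b = RCC5Basic.EQ := hb
    subst this
    rwa [(t_unit_right a g).1 ht]
  · intro hg
    exact ⟨g, hg, RCC5Basic.EQ, rfl, (t_unit_right g g).2 rfl⟩

lemma conv_comp (R S : RCC5Rel) :
    RCC5Rel.conv (RCC5Rel.comp R S) =
      RCC5Rel.comp (RCC5Rel.conv S) (RCC5Rel.conv R) := by
  ext g
  rw [mem_conv, comp_mem_iff, comp_mem_iff]
  constructor
  · rintro ⟨a, ha, b, hb, ht⟩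
    refine ⟨RCC5Basic.conv b, ?_, RCC5Basic.conv a, ?_, ?_⟩
    · rw [mem_conv, conv_conv]; exact hb
    · rw [mem_conv, conv_conv]; exact ha
    · have := t_conv a b (RCC5Basic.conv g) ht
      rwa [conv_conv] at this
  · rintro ⟨b', hb', a', ha', ht⟩
    refine ⟨RCC5Basic.conv a', ha', RCC5Basic.conv b', hb', ?_⟩
    exact t_conv b' a' g ht

lemma comp_singleton_mem {a b g : RCC5Basic} :
    g ∈ RCC5Rel.comp {a} {b} ↔ tmem a b g = true := by
  rw [comp_mem_iff]
  constructor
  · rintro ⟨a', ha', b', hb', ht⟩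
    have h1 : a' = a := ha'
    have h2 : b' = b := hb'
    rwa [h1, h2] at ht
  · intro h; exact ⟨a, rfl, b, rfl, h⟩


/-! ### realization of path-consistent scenarios -/

section Realization

variable {n : ℕ} (s : Fin n → Fin n → RCC5Basic)

/-- `i` is a (non-strict) part of `j` according to scenario `s`. -/
def sle (i j : Fin n) : Prop := s i j = RCC5Basic.PP ∨ s i j = RCC5Basic.EQ

instance (i j : Fin n) : Decidable (sle s i j) := by unfold sle; infer_instance

variable (hconv : ∀ i j, s j i = RCC5Basic.conv (s i j))
  (hdiag : ∀ i, s i i = RCC5Basic.EQ)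
  (hpc : ∀ i j k, tmem (s i k) (s k j) (s i j) = true)

/-- the base points of the canonical model -/
abbrev RIdx (n : ℕ) : Type := Fin n ⊕ (Fin n × Fin n)

/-- the finite set representing variable `i` -/
def XS (i : Fin n) : Finset (RIdx n) :=
  ((Finset.univ.filter (fun p : Fin n => sle s p i)).map
    ⟨Sum.inl, fun _ _ h => by injection h⟩) ∪
  ((Finset.univ.filter (fun pq : Fin n × Fin n =>
      s pq.1 pq.2 = RCC5Basic.PO ∧ (sle s pq.1 i ∨ sle s pq.2 i))).map
    ⟨Sum.inr, fun _ _ h => by injection h⟩)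

lemma mem_XS_inl {i p : Fin n} : Sum.inl p ∈ XS s i ↔ sle s p i := by
  simp [XS]
  constructor
  · rintro ⟨a, ha, he⟩
    have he' : Sum.inl a = (Sum.inl p : RIdx n) := he
    exact (Sum.inl.inj he') ▸ ha
  · intro h; exact ⟨p, h, rfl⟩

lemma mem_XS_inr {i : Fin n} {pq : Fin n × Fin n} :
    Sum.inr pq ∈ XS s i ↔
      s pq.1 pq.2 = RCC5Basic.PO ∧ (sle s pq.1 i ∨ sle s pq.2 i) := by
  simp [XS]
  constructor
  · rintro ⟨a, b, ha, he⟩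
    have he' : Sum.inr (a, b) = (Sum.inr pq : RIdx n) := he
    have := Sum.inr.inj he'
    subst this
    exact ha
  · intro h; exact ⟨pq.1, pq.2, h, rfl⟩

include hdiag in
lemma sle_refl (i : Fin n) : sle s i i := Or.inr (hdiag i)

include hdiag in
lemma XS_nonempty (i : Fin n) : (XS s i).Nonempty :=
  ⟨Sum.inl i, (mem_XS_inl s).2 (sle_refl s hdiag i)⟩

lemma t_le_trans : ∀ a b c : RCC5Basic, tmem a b c = true →
    (a = RCC5Basic.PP ∨ a = RCC5Basic.EQ) → (b = RCC5Basic.PP ∨ b = RCC5Basic.EQ) →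
    (c = RCC5Basic.PP ∨ c = RCC5Basic.EQ) := by decide

lemma t_O1 : ∀ a b c : RCC5Basic, tmem a b c = true →
    (a = RCC5Basic.PPi ∨ a = RCC5Basic.EQ) → b ≠ RCC5Basic.DR → c ≠ RCC5Basic.DR := by
  decide

lemma t_O2 : ∀ a b c : RCC5Basic, tmem a b c = true →
    a ≠ RCC5Basic.DR → (b = RCC5Basic.PP ∨ b = RCC5Basic.EQ) → c ≠ RCC5Basic.DR := by
  decide

include hpc in
lemma sle_trans {i j k : Fin n} (h1 : sle s i j) (h2 : sle s j k) : sle s i k :=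
  t_le_trans _ _ _ (hpc i k j) h1 h2

include hconv in
lemma sle_convs {i k : Fin n} (h : sle s k i) :
    s i k = RCC5Basic.PPi ∨ s i k = RCC5Basic.EQ := by
  rcases h with h | h
  · exact Or.inl (by rw [hconv k i, h]; rfl)
  · exact Or.inr (by rw [hconv k i, h]; rfl)

include hconv hpc in
lemma ov_up {i j k : Fin n} (h1 : sle s k i) (h2 : s k j ≠ RCC5Basic.DR) :
    s i j ≠ RCC5Basic.DR :=
  t_O1 _ _ _ (hpc i j k) (sle_convs s hconv h1) h2

include hpc in
lemma ov_right {i j k : Fin n} (h1 : s i k ≠ RCC5Basic.DR) (h2 : sle s k j) :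
    s i j ≠ RCC5Basic.DR :=
  t_O2 _ _ _ (hpc i j k) h1 h2

lemma sle_not_DR {i j : Fin n} (h : sle s i j) : s i j ≠ RCC5Basic.DR := by
  rcases h with h | h <;> rw [h] <;> simp

include hconv hpc in
lemma XS_subset {i j : Fin n} (h : sle s i j) : XS s i ⊆ XS s j := by
  intro t ht
  cases t with
  | inl p =>
    rw [mem_XS_inl] at ht ⊢
    exact sle_trans s hpc ht h
  | inr pq =>
    rw [mem_XS_inr] at ht ⊢
    refine ⟨ht.1, ?_⟩
    rcases ht.2 with h' | h'
    · exact Or.inl (sle_trans s hpc h' h)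
    · exact Or.inr (sle_trans s hpc h' h)

include hconv hpc in
lemma XS_inter_empty {i j : Fin n} (h : s i j = RCC5Basic.DR) :
    XS s i ∩ XS s j = ∅ := by
  rw [Finset.eq_empty_iff_forall_notMem]
  intro t ht
  obtain ⟨ht1, ht2⟩ := Finset.mem_inter.1 ht
  cases t with
  | inl p =>
    rw [mem_XS_inl] at ht1 ht2
    exact ov_up s hconv hpc ht1 (sle_not_DR s ht2) h
  | inr pq =>
    obtain ⟨p, q⟩ := pq
    rw [mem_XS_inr] at ht1 ht2
    obtain ⟨hpo, hi⟩ := ht1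
    obtain ⟨_, hj⟩ := ht2
    have hqp : s q p = RCC5Basic.PO := by
      rw [hconv p q, hpo]; rfl
    have hov : s i j ≠ RCC5Basic.DR := by
      rcases hi with hi | hi <;> rcases hj with hj | hj
      · exact ov_up s hconv hpc hi (sle_not_DR s hj)
      · refine ov_up s hconv hpc hi (ov_right s hpc ?_ hj)
        rw [hpo]; simp
      · refine ov_up s hconv hpc hi (ov_right s hpc ?_ hj)
        rw [hqp]; simp
      · exact ov_up s hconv hpc hi (sle_not_DR s hj)
    exact hov h

include hconv hdiag hpc in
lemma XS_setRel (i j : Fin n) : setRel (XS s i) (XS s j) = s i j := by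
  have hinl : ∀ {p k : Fin n}, Sum.inl p ∈ XS s k ↔ sle s p k := mem_XS_inl s
  cases hij : s i j with
  | EQ =>
    have h1 : sle s i j := Or.inr hij
    have h2 : sle s j i := Or.inr (by rw [hconv i j, hij]; rfl)
    have : XS s i = XS s j :=
      Finset.Subset.antisymm (XS_subset s hconv hpc h1) (XS_subset s hconv hpc h2)
    rw [setRel, if_pos this]
  | PP =>
    have h1 : sle s i j := Or.inl hij
    have h2 : ¬ sle s j i := by
      rintro (h | h) <;> rw [hconv i j, hij] at h <;> simp [RCC5Basic.conv] at h
    have hne : XS s i ≠ XS s j := by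
      intro hc
      exact h2 (hinl.1 (hc ▸ (hinl.2 (sle_refl s hdiag j))))
    rw [setRel, if_neg hne, if_pos (XS_subset s hconv hpc h1)]
  | PPi =>
    have h2 : sle s j i := Or.inl (by rw [hconv i j, hij]; rfl)
    have h1 : ¬ sle s i j := by
      rintro (h | h) <;> rw [h] at hij <;> exact absurd hij (by simp)
    have hne : XS s i ≠ XS s j := by
      intro hc
      exact h1 (hinl.1 (hc ▸ (hinl.2 (sle_refl s hdiag i))))
    have hns : ¬ XS s i ⊆ XS s j := by
      intro hc
      exact h1 (hinl.1 (hc (hinl.2 (sle_refl s hdiag i))))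
    rw [setRel, if_neg hne, if_neg hns, if_pos (XS_subset s hconv hpc h2)]
  | PO =>
    have h1 : ¬ sle s i j := by
      rintro (h | h) <;> rw [h] at hij <;> exact absurd hij (by simp)
    have h2 : ¬ sle s j i := by
      rintro (h | h) <;> rw [hconv i j, hij] at h <;> simp [RCC5Basic.conv] at h
    have hne : XS s i ≠ XS s j := by
      intro hc
      exact h1 (hinl.1 (hc ▸ (hinl.2 (sle_refl s hdiag i))))
    have hns1 : ¬ XS s i ⊆ XS s j := by
      intro hc
      exact h1 (hinl.1 (hc (hinl.2 (sle_refl s hdiag i))))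
    have hns2 : ¬ XS s j ⊆ XS s i := by
      intro hc
      exact h2 (hinl.1 (hc (hinl.2 (sle_refl s hdiag j))))
    have hint : (XS s i ∩ XS s j).Nonempty := by
      refine ⟨Sum.inr (i, j), Finset.mem_inter.2 ⟨?_, ?_⟩⟩
      · exact (mem_XS_inr s).2 ⟨hij, Or.inl (sle_refl s hdiag i)⟩
      · exact (mem_XS_inr s).2 ⟨hij, Or.inr (sle_refl s hdiag j)⟩
    rw [setRel, if_neg hne, if_neg hns1, if_neg hns2, if_pos hint]
  | DR =>
    have hemp := XS_inter_empty s hconv hpc hij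
    have hne : XS s i ≠ XS s j := by
      intro hc
      have : Sum.inl i ∈ XS s i ∩ XS s j := by
        rw [Finset.mem_inter]
        exact ⟨(mem_XS_inl s).2 (sle_refl s hdiag i), hc ▸ (mem_XS_inl s).2 (sle_refl s hdiag i)⟩
      rw [hemp] at this; exact absurd this (Finset.notMem_empty _)
    have hns1 : ¬ XS s i ⊆ XS s j := by
      intro hc
      have : Sum.inl i ∈ XS s i ∩ XS s j :=
        Finset.mem_inter.2 ⟨(mem_XS_inl s).2 (sle_refl s hdiag i),
          hc ((mem_XS_inl s).2 (sle_refl s hdiag i))⟩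
      rw [hemp] at this; exact absurd this (Finset.notMem_empty _)
    have hns2 : ¬ XS s j ⊆ XS s i := by
      intro hc
      have : Sum.inl j ∈ XS s i ∩ XS s j :=
        Finset.mem_inter.2 ⟨hc ((mem_XS_inl s).2 (sle_refl s hdiag j)),
          (mem_XS_inl s).2 (sle_refl s hdiag j)⟩
      rw [hemp] at this; exact absurd this (Finset.notMem_empty _)
    have hni : ¬ (XS s i ∩ XS s j).Nonempty := by
      rw [hemp]; exact Finset.not_nonempty_empty
    rw [setRel, if_neg hne, if_neg hns1, if_neg hns2, if_neg hni]

include hconv hdiag hpc in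
theorem scenario_realizable :
    ∃ a : Fin n → Region, ∀ i j, RCC5Basic.interp (s i j) (a i) (a j) := by
  have hinj : Function.Injective (Encodable.encode : RIdx n → ℕ) :=
    Encodable.encode_injective
  refine ⟨fun i => uReg Encodable.encode (XS s i) (XS_nonempty s hdiag i), fun i j => ?_⟩
  have := interp_setRel (Encodable.encode : RIdx n → ℕ) hinj (XS s i) (XS s j)
    (XS_nonempty s hdiag i) (XS_nonempty s hdiag j)
  rwa [XS_setRel s hconv hdiag hpc i j] at this

end Realization


/-! ### the one-step singleton refinement of a path-consistent network over a
distributive subalgebra -/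

section UUpdate

local infixl:70 " ⋄ " => RCC5Rel.comp

lemma mem_comp_of {R S : RCC5Rel} {g a b : RCC5Basic} (ha : a ∈ R) (hb : b ∈ S)
    (ht : tmem a b g = true) : g ∈ R ⋄ S :=
  comp_mem_iff.2 ⟨a, ha, b, hb, ht⟩

variable {n : ℕ} {𝒮 : Set RCC5Rel} (h𝒮 : IsDistributiveSubalgebra 𝒮)
  (F : Fin n → Fin n → RCC5Rel)
  (hconvF : ∀ i j, F j i = RCC5Rel.conv (F i j))
  (hdiagF : ∀ i, F i i = {RCC5Basic.EQ})
  (hoverF : ∀ i j, F i j ∈ 𝒮)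
  (hpcF : ∀ i j k, F i j ⊆ (F i k) ⋄ (F k j))
  (k l : Fin n) (β : RCC5Basic) (hβ : β ∈ F k l)

include hconvF in
lemma mem_F_conv {i j : Fin n} {b : RCC5Basic} (h : b ∈ F i j) :
    RCC5Basic.conv b ∈ F j i := by
  rw [hconvF i j, mem_conv, conv_conv]; exact h

/-- the two path-composition terms through the refined edge -/
def Aterm (i j : Fin n) : RCC5Rel := (F i k) ⋄ (({β} : RCC5Rel) ⋄ (F l j))

def Bterm (i j : Fin n) : RCC5Rel :=
  (F i l) ⋄ (({RCC5Basic.conv β} : RCC5Rel) ⋄ (F k j))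

/-- the refined network -/
def Upd (i j : Fin n) : RCC5Rel :=
  F i j ∩ (Aterm F k l β i j ∩ Bterm F k l β i j)

lemma Aterm_mem (h𝒮 : IsDistributiveSubalgebra 𝒮) (hoverF : ∀ i j, F i j ∈ 𝒮) (i j : Fin n) :
    Aterm F k l β i j ∈ 𝒮 :=
  h𝒮.2.2.1 _ (hoverF i k) _ (h𝒮.2.2.1 _ (h𝒮.1 β) _ (hoverF l j))

lemma Bterm_mem (h𝒮 : IsDistributiveSubalgebra 𝒮) (hoverF : ∀ i j, F i j ∈ 𝒮) (i j : Fin n) :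
    Bterm F k l β i j ∈ 𝒮 :=
  h𝒮.2.2.1 _ (hoverF i l) _ (h𝒮.2.2.1 _ (h𝒮.1 _) _ (hoverF k j))

include hconvF hpcF hβ in
lemma W_nonempty (v : Fin n) :
    (F l v ∩ (({RCC5Basic.conv β} : RCC5Rel) ⋄ (F k v))).Nonempty := by
  have hβ' : RCC5Basic.conv β ∈ F l k := mem_F_conv F hconvF hβ
  obtain ⟨c, hc, w, hw, ht⟩ := comp_mem_iff.1 (hpcF l k v hβ')
  exact ⟨c, hc, mem_comp_of rfl (mem_F_conv F hconvF hw) (t_rot2 c w _ ht)⟩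

include h𝒮 hconvF hoverF hpcF hβ in
lemma Upd_nonempty (u v : Fin n) : (Upd F k l β u v).Nonempty := by
  obtain ⟨a, ha, m, hm, ht1⟩ := comp_mem_iff.1 (hpcF k l u hβ)
  have hrot1 : tmem (RCC5Basic.conv a) β m = true := t_rot1 a m β ht1
  have hm2 : m ∈ (F u k) ⋄ ({β} : RCC5Rel) :=
    mem_comp_of (mem_F_conv F hconvF ha) rfl hrot1
  have hm3 : m ∈ (F u v) ⋄ ((F v k) ⋄ ({β} : RCC5Rel)) := by
    rw [← comp_assoc]
    exact comp_mono (hpcF u k v) subset_rfl hm2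
  have hm4 : m ∈ (F u v) ⋄ (F v l) := hpcF u l v hm
  -- the intersection F v l ∩ (F v k ⋄ {β}) is the converse of the W set, hence nonempty
  have hWc : (F v l ∩ ((F v k) ⋄ ({β} : RCC5Rel))).Nonempty := by
    obtain ⟨c, hc1, hc2⟩ := W_nonempty F hconvF hpcF k l β hβ v
    refine ⟨RCC5Basic.conv c, ?_, ?_⟩
    · exact mem_F_conv F hconvF hc1
    · have : RCC5Rel.conv (({RCC5Basic.conv β} : RCC5Rel) ⋄ (F k v)) =
          (F v k) ⋄ ({β} : RCC5Rel) := by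
        rw [conv_comp, conv_singleton, conv_conv, ← hconvF k v]
      rw [← this, mem_conv, conv_conv]
      exact hc2
  have hdist : (F u v) ⋄ (F v l ∩ ((F v k) ⋄ ({β} : RCC5Rel))) =
      ((F u v) ⋄ (F v l)) ∩ ((F u v) ⋄ ((F v k) ⋄ ({β} : RCC5Rel))) :=
    (h𝒮.2.2.2.2 _ (hoverF u v) _ (hoverF v l) _
      (h𝒮.2.2.1 _ (hoverF v k) _ (h𝒮.1 β)) hWc).1
  have hm5 : m ∈ (F u v) ⋄ (F v l ∩ ((F v k) ⋄ ({β} : RCC5Rel))) := by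
    rw [hdist]; exact ⟨hm4, hm3⟩
  obtain ⟨c', hc', z', hz', ht2⟩ := comp_mem_iff.1 hm5
  have hz1 : RCC5Basic.conv z' ∈ F l v := mem_F_conv F hconvF hz'.1
  have hz2 : RCC5Basic.conv z' ∈ ({RCC5Basic.conv β} : RCC5Rel) ⋄ (F k v) := by
    have : RCC5Rel.conv ((F v k) ⋄ ({β} : RCC5Rel)) =
        ({RCC5Basic.conv β} : RCC5Rel) ⋄ (F k v) := by
      rw [conv_comp, conv_singleton, ← hconvF v k]
    rw [← this, mem_conv, conv_conv]
    exact hz'.2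
  have hrot2 : tmem m (RCC5Basic.conv z') c' = true := t_rot2 c' z' m ht2
  refine ⟨c', hc', ?_, ?_⟩
  · -- c' ∈ Aterm u v
    obtain ⟨ee, he1, he2⟩ := (t_assoc (RCC5Basic.conv a) β (RCC5Basic.conv z') c').1
      ⟨m, hrot1, hrot2⟩
    exact mem_comp_of (mem_F_conv F hconvF ha) (mem_comp_of rfl hz1 he1) he2
  · -- c' ∈ Bterm u v
    exact mem_comp_of hm hz2 hrot2

include hconvF hdiagF hpcF hβ in
lemma Upd_diag (u : Fin n) : Upd F k l β u u = {RCC5Basic.EQ} := by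
  apply subset_antisymm
  · intro g hg
    have := hg.1
    rwa [hdiagF u] at this
  · intro g hg
    have hgE : g = RCC5Basic.EQ := hg
    subst hgE
    obtain ⟨a, ha, m, hm, ht1⟩ := comp_mem_iff.1 (hpcF k l u hβ)
    refine ⟨by rw [hdiagF u]; rfl, ?_, ?_⟩
    · -- EQ ∈ Aterm u u
      refine mem_comp_of (mem_F_conv F hconvF ha)
        (mem_comp_of rfl (mem_F_conv F hconvF hm) (t_rot2 a m β ht1)) (t_circ a)
    · -- EQ ∈ Bterm u u
      have h1 : tmem (RCC5Basic.conv a) β m = true := t_rot1 a m β ht1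
      have h2 : tmem (RCC5Basic.conv β) a (RCC5Basic.conv m) = true := by
        have := t_conv _ _ _ h1
        rwa [conv_conv] at this
      exact mem_comp_of hm (mem_comp_of rfl ha h2) (t_circ' m)

include hdiagF hβ in
lemma Upd_kl : Upd F k l β k l = {β} := by
  apply subset_antisymm
  · intro g hg
    have h1 : g ∈ Aterm F k l β k l := hg.2.1
    rw [Aterm, hdiagF k, hdiagF l, comp_EQ_right, comp_EQ_left] at h1
    exact h1
  · intro g hg
    have hgβ : g = β := hg
    obtain ⟨d, hd1, hd2⟩ := t_refine β
    rw [hgβ]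
    refine ⟨hβ, ?_, ?_⟩
    · rw [Aterm, hdiagF k, hdiagF l, comp_EQ_right, comp_EQ_left]; rfl
    · exact mem_comp_of hβ (mem_comp_of rfl hβ hd1) hd2

include hconvF in
lemma Upd_conv (i j : Fin n) :
    Upd F k l β j i = RCC5Rel.conv (Upd F k l β i j) := by
  have hA : RCC5Rel.conv (Aterm F k l β i j) = Bterm F k l β j i := by
    rw [Aterm, Bterm, conv_comp, conv_comp, conv_singleton, ← hconvF i k, ← hconvF l j,
      comp_assoc]
  have hB : RCC5Rel.conv (Bterm F k l β i j) = Aterm F k l β j i := by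
    rw [Aterm, Bterm, conv_comp, conv_comp, conv_singleton, conv_conv, ← hconvF i l,
      ← hconvF k j, comp_assoc]
  rw [Upd, Upd, conv_inter, conv_inter, hA, hB, ← hconvF i j]
  ext g
  exact ⟨fun h => ⟨h.1, h.2.2, h.2.1⟩, fun h => ⟨h.1, h.2.2, h.2.1⟩⟩

include h𝒮 hconvF hoverF hpcF hβ in
lemma Upd_over (i j : Fin n) : Upd F k l β i j ∈ 𝒮 := by
  have hAB : (Aterm F k l β i j ∩ Bterm F k l β i j).Nonempty := by
    obtain ⟨g, hg⟩ := Upd_nonempty h𝒮 F hconvF hoverF hpcF k l β hβ i j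
    exact ⟨g, hg.2⟩
  have h1 : Aterm F k l β i j ∩ Bterm F k l β i j ∈ 𝒮 :=
    h𝒮.2.2.2.1 _ (Aterm_mem F k l β h𝒮 hoverF i j) _ (Bterm_mem F k l β h𝒮 hoverF i j) hAB
  exact h𝒮.2.2.2.1 _ (hoverF i j) _ h1
    ⟨_, (Upd_nonempty h𝒮 F hconvF hoverF hpcF k l β hβ i j).choose_spec⟩

include h𝒮 hconvF hdiagF hoverF hpcF hβ in
lemma Upd_pc (u v w : Fin n) :
    Upd F k l β u v ⊆ (Upd F k l β u w) ⋄ (Upd F k l β w v) := by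
  have hβ' : RCC5Basic.conv β ∈ F l k := mem_F_conv F hconvF hβ
  -- the nine product inclusions
  have h11 : Upd F k l β u v ⊆ (F u w) ⋄ (F w v) := fun g hg => hpcF u v w hg.1
  have h12 : Upd F k l β u v ⊆ (F u w) ⋄ (Aterm F k l β w v) := by
    intro g hg
    have h1 : g ∈ ((F u w) ⋄ (F w k)) ⋄ (({β} : RCC5Rel) ⋄ (F l v)) :=
      comp_mono (hpcF u k w) subset_rfl hg.2.1
    rwa [comp_assoc] at h1
  have h13 : Upd F k l β u v ⊆ (F u w) ⋄ (Bterm F k l β w v) := by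
    intro g hg
    have h1 : g ∈ ((F u w) ⋄ (F w l)) ⋄ (({RCC5Basic.conv β} : RCC5Rel) ⋄ (F k v)) :=
      comp_mono (hpcF u l w) subset_rfl hg.2.2
    rwa [comp_assoc] at h1
  have h21 : Upd F k l β u v ⊆ (Aterm F k l β u w) ⋄ (F w v) := by
    intro g hg
    have h1 : g ∈ (F u k) ⋄ (({β} : RCC5Rel) ⋄ ((F l w) ⋄ (F w v))) :=
      comp_mono subset_rfl (comp_mono subset_rfl (hpcF l v w)) hg.2.1
    have e : (Aterm F k l β u w) ⋄ (F w v) =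
        (F u k) ⋄ (({β} : RCC5Rel) ⋄ ((F l w) ⋄ (F w v))) := by
      simp only [Aterm, comp_assoc]
    rwa [e]
  have h31 : Upd F k l β u v ⊆ (Bterm F k l β u w) ⋄ (F w v) := by
    intro g hg
    have h1 : g ∈ (F u l) ⋄ (({RCC5Basic.conv β} : RCC5Rel) ⋄ ((F k w) ⋄ (F w v))) :=
      comp_mono subset_rfl (comp_mono subset_rfl (hpcF k v w)) hg.2.2
    have e : (Bterm F k l β u w) ⋄ (F w v) =
        (F u l) ⋄ (({RCC5Basic.conv β} : RCC5Rel) ⋄ ((F k w) ⋄ (F w v))) := by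
      simp only [Bterm, comp_assoc]
    rwa [e]
  have hrefβ : ({β} : RCC5Rel) ⊆
      ({β} : RCC5Rel) ⋄ (({RCC5Basic.conv β} : RCC5Rel) ⋄ ({β} : RCC5Rel)) := by
    intro g hg
    have hgβ : g = β := hg
    obtain ⟨d, hd1, hd2⟩ := t_refine β
    rw [hgβ]
    exact mem_comp_of rfl (mem_comp_of rfl rfl hd1) hd2
  have hrefβ' : ({RCC5Basic.conv β} : RCC5Rel) ⊆
      ({RCC5Basic.conv β} : RCC5Rel) ⋄ (({β} : RCC5Rel) ⋄ ({RCC5Basic.conv β} : RCC5Rel)) := by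
    intro g hg
    have hgβ : g = RCC5Basic.conv β := hg
    obtain ⟨d, hd1, hd2⟩ := t_refine (RCC5Basic.conv β)
    rw [conv_conv] at hd1
    rw [hgβ]
    exact mem_comp_of rfl (mem_comp_of rfl rfl hd1) hd2
  have h22 : Upd F k l β u v ⊆ (Aterm F k l β u w) ⋄ (Aterm F k l β w v) := by
    intro g hg
    have hc : ({RCC5Basic.conv β} : RCC5Rel) ⊆ (F l w) ⋄ (F w k) := by
      intro g' hg'
      have : g' = RCC5Basic.conv β := hg'
      rw [this]
      exact hpcF l k w hβ'
    have h220 : ({β} : RCC5Rel) ⊆ ({β} : RCC5Rel) ⋄ (((F l w) ⋄ (F w k)) ⋄ ({β} : RCC5Rel)) :=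
      hrefβ.trans (comp_mono subset_rfl (comp_mono hc subset_rfl))
    have h1 : g ∈ (F u k) ⋄ ((({β} : RCC5Rel) ⋄ (((F l w) ⋄ (F w k)) ⋄ ({β} : RCC5Rel))) ⋄ (F l v)) :=
      comp_mono subset_rfl (comp_mono h220 subset_rfl) hg.2.1
    have e : (Aterm F k l β u w) ⋄ (Aterm F k l β w v) =
        (F u k) ⋄ ((({β} : RCC5Rel) ⋄ (((F l w) ⋄ (F w k)) ⋄ ({β} : RCC5Rel))) ⋄ (F l v)) := by
      simp only [Aterm, comp_assoc]
    rwa [e]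
  have h33 : Upd F k l β u v ⊆ (Bterm F k l β u w) ⋄ (Bterm F k l β w v) := by
    intro g hg
    have hc : ({β} : RCC5Rel) ⊆ (F k w) ⋄ (F w l) := by
      intro g' hg'
      have : g' = β := hg'
      rw [this]
      exact hpcF k l w hβ
    have h330 : ({RCC5Basic.conv β} : RCC5Rel) ⊆
        ({RCC5Basic.conv β} : RCC5Rel) ⋄ (((F k w) ⋄ (F w l)) ⋄ ({RCC5Basic.conv β} : RCC5Rel)) :=
      hrefβ'.trans (comp_mono subset_rfl (comp_mono hc subset_rfl))
    have h1 : g ∈ (F u l) ⋄ ((({RCC5Basic.conv β} : RCC5Rel) ⋄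
        (((F k w) ⋄ (F w l)) ⋄ ({RCC5Basic.conv β} : RCC5Rel))) ⋄ (F k v)) :=
      comp_mono subset_rfl (comp_mono h330 subset_rfl) hg.2.2
    have e : (Bterm F k l β u w) ⋄ (Bterm F k l β w v) =
        (F u l) ⋄ ((({RCC5Basic.conv β} : RCC5Rel) ⋄
        (((F k w) ⋄ (F w l)) ⋄ ({RCC5Basic.conv β} : RCC5Rel))) ⋄ (F k v)) := by
      simp only [Bterm, comp_assoc]
    rwa [e]
  have hEQl : ({RCC5Basic.EQ} : RCC5Rel) ⊆ (F l w) ⋄ (F w l) := by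
    intro g hg
    exact hpcF l l w (by rw [hdiagF l]; exact hg)
  have hEQk : ({RCC5Basic.EQ} : RCC5Rel) ⊆ (F k w) ⋄ (F w k) := by
    intro g hg
    exact hpcF k k w (by rw [hdiagF k]; exact hg)
  have hEQββ' : ({RCC5Basic.EQ} : RCC5Rel) ⊆ ({β} : RCC5Rel) ⋄ ({RCC5Basic.conv β} : RCC5Rel) := by
    intro g hg
    have : g = RCC5Basic.EQ := hg
    rw [this]
    exact mem_comp_of rfl rfl (t_circ' β)
  have hEQβ'β : ({RCC5Basic.EQ} : RCC5Rel) ⊆ ({RCC5Basic.conv β} : RCC5Rel) ⋄ ({β} : RCC5Rel) := by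
    intro g hg
    have : g = RCC5Basic.EQ := hg
    rw [this]
    exact mem_comp_of rfl rfl (t_circ β)
  have h23 : Upd F k l β u v ⊆ (Aterm F k l β u w) ⋄ (Bterm F k l β w v) := by
    intro g hg
    have h0 : g ∈ (F u k) ⋄ (F k v) := hpcF u v k hg.1
    have h1 : g ∈ (F u k) ⋄ (({RCC5Basic.EQ} : RCC5Rel) ⋄ (F k v)) := by
      rwa [comp_EQ_left]
    have h2 : g ∈ (F u k) ⋄ ((({β} : RCC5Rel) ⋄ ({RCC5Basic.conv β} : RCC5Rel)) ⋄ (F k v)) :=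
      comp_mono subset_rfl (comp_mono hEQββ' subset_rfl) h1
    have h3 : g ∈ (F u k) ⋄ (({β} : RCC5Rel) ⋄ (({RCC5Basic.EQ} : RCC5Rel) ⋄
        (({RCC5Basic.conv β} : RCC5Rel) ⋄ (F k v)))) := by
      rw [comp_EQ_left]
      have e : (F u k) ⋄ ((({β} : RCC5Rel) ⋄ ({RCC5Basic.conv β} : RCC5Rel)) ⋄ (F k v)) =
          (F u k) ⋄ (({β} : RCC5Rel) ⋄ (({RCC5Basic.conv β} : RCC5Rel) ⋄ (F k v))) := by
        simp only [comp_assoc]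
      rwa [e] at h2
    have h4 : g ∈ (F u k) ⋄ (({β} : RCC5Rel) ⋄ (((F l w) ⋄ (F w l)) ⋄
        (({RCC5Basic.conv β} : RCC5Rel) ⋄ (F k v)))) :=
      comp_mono subset_rfl (comp_mono subset_rfl (comp_mono hEQl subset_rfl)) h3
    have e : (Aterm F k l β u w) ⋄ (Bterm F k l β w v) =
        (F u k) ⋄ (({β} : RCC5Rel) ⋄ (((F l w) ⋄ (F w l)) ⋄
        (({RCC5Basic.conv β} : RCC5Rel) ⋄ (F k v)))) := by
      simp only [Aterm, Bterm, comp_assoc]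
    rwa [e]
  have h32 : Upd F k l β u v ⊆ (Bterm F k l β u w) ⋄ (Aterm F k l β w v) := by
    intro g hg
    have h0 : g ∈ (F u l) ⋄ (F l v) := hpcF u v l hg.1
    have h1 : g ∈ (F u l) ⋄ (({RCC5Basic.EQ} : RCC5Rel) ⋄ (F l v)) := by
      rwa [comp_EQ_left]
    have h2 : g ∈ (F u l) ⋄ ((({RCC5Basic.conv β} : RCC5Rel) ⋄ ({β} : RCC5Rel)) ⋄ (F l v)) :=
      comp_mono subset_rfl (comp_mono hEQβ'β subset_rfl) h1
    have h3 : g ∈ (F u l) ⋄ (({RCC5Basic.conv β} : RCC5Rel) ⋄ (({RCC5Basic.EQ} : RCC5Rel) ⋄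
        (({β} : RCC5Rel) ⋄ (F l v)))) := by
      rw [comp_EQ_left]
      have e : (F u l) ⋄ ((({RCC5Basic.conv β} : RCC5Rel) ⋄ ({β} : RCC5Rel)) ⋄ (F l v)) =
          (F u l) ⋄ (({RCC5Basic.conv β} : RCC5Rel) ⋄ (({β} : RCC5Rel) ⋄ (F l v))) := by
        simp only [comp_assoc]
      rwa [e] at h2
    have h4 : g ∈ (F u l) ⋄ (({RCC5Basic.conv β} : RCC5Rel) ⋄ (((F k w) ⋄ (F w k)) ⋄
        (({β} : RCC5Rel) ⋄ (F l v)))) :=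
      comp_mono subset_rfl (comp_mono subset_rfl (comp_mono hEQk subset_rfl)) h3
    have e : (Bterm F k l β u w) ⋄ (Aterm F k l β w v) =
        (F u l) ⋄ (({RCC5Basic.conv β} : RCC5Rel) ⋄ (((F k w) ⋄ (F w k)) ⋄
        (({β} : RCC5Rel) ⋄ (F l v)))) := by
      simp only [Aterm, Bterm, comp_assoc]
    rwa [e]
  -- now distribute the composition of intersections
  have hUne := Upd_nonempty h𝒮 F hconvF hoverF hpcF k l β hβ
  have hUS := Upd_over h𝒮 F hconvF hoverF hpcF k l β hβ
  have hAS : ∀ i j, Aterm F k l β i j ∈ 𝒮 := Aterm_mem F k l β h𝒮 hoverF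
  have hBS : ∀ i j, Bterm F k l β i j ∈ 𝒮 := Bterm_mem F k l β h𝒮 hoverF
  have hABne : ∀ i j, (Aterm F k l β i j ∩ Bterm F k l β i j).Nonempty := by
    intro i j
    obtain ⟨g, hg⟩ := hUne i j
    exact ⟨g, hg.2⟩
  have hABS : ∀ i j, Aterm F k l β i j ∩ Bterm F k l β i j ∈ 𝒮 := fun i j =>
    h𝒮.2.2.2.1 _ (hAS i j) _ (hBS i j) (hABne i j)
  have dist1 : (Upd F k l β u w) ⋄ (Upd F k l β w v) =
      ((Upd F k l β u w) ⋄ (F w v)) ∩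
      (((Upd F k l β u w) ⋄ (Aterm F k l β w v)) ∩ ((Upd F k l β u w) ⋄ (Bterm F k l β w v))) := by
    have e1 := (h𝒮.2.2.2.2 _ (hUS u w) _ (hoverF w v) _ (hABS w v) (hUne w v)).1
    have e2 := (h𝒮.2.2.2.2 _ (hUS u w) _ (hAS w v) _ (hBS w v) (hABne w v)).1
    have eU : Upd F k l β w v = F w v ∩ (Aterm F k l β w v ∩ Bterm F k l β w v) := rfl
    rw [eU, e1, e2]
  have dist2 : ∀ Y : RCC5Rel, Y ∈ 𝒮 →
      (Upd F k l β u w) ⋄ Y =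
        ((F u w) ⋄ Y) ∩ (((Aterm F k l β u w) ⋄ Y) ∩ ((Bterm F k l β u w) ⋄ Y)) := by
    intro Y hY
    have e1 := (h𝒮.2.2.2.2 _ hY _ (hoverF u w) _ (hABS u w) (hUne u w)).2
    have e2 := (h𝒮.2.2.2.2 _ hY _ (hAS u w) _ (hBS u w) (hABne u w)).2
    have eU : Upd F k l β u w = F u w ∩ (Aterm F k l β u w ∩ Bterm F k l β u w) := rfl
    rw [eU, e1, e2]
  intro g hg
  rw [dist1, dist2 _ (hoverF w v), dist2 _ (hAS w v), dist2 _ (hBS w v)]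
  exact ⟨⟨h11 hg, h21 hg, h31 hg⟩, ⟨h12 hg, h22 hg, h32 hg⟩, ⟨h13 hg, h23 hg, h33 hg⟩⟩

end UUpdate


/-! ### refining a path-consistent network over a distributive subalgebra to a scenario -/

section Scenario

local infixl:70 " ⋄ " => RCC5Rel.comp

variable {n : ℕ} {𝒮 : Set RCC5Rel}

/-- the total size of a network -/
noncomputable def msize (F : Fin n → Fin n → RCC5Rel) : ℕ :=
  ∑ p : Fin n × Fin n, (F p.1 p.2).ncard

lemma scenario_of_singletons (F : Fin n → Fin n → RCC5Rel)
    (hconvF : ∀ i j, F j i = RCC5Rel.conv (F i j))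
    (hdiagF : ∀ i, F i i = {RCC5Basic.EQ})
    (hpcF : ∀ i j k, F i j ⊆ (F i k) ⋄ (F k j))
    (hall : ∀ u v, ∃ b, F u v = {b}) :
    ∃ s : Fin n → Fin n → RCC5Basic, (∀ u v, s u v ∈ F u v) ∧
      (∀ u v, s v u = RCC5Basic.conv (s u v)) ∧ (∀ u, s u u = RCC5Basic.EQ) ∧
      (∀ u v w, tmem (s u w) (s w v) (s u v) = true) := by
  choose s hs using hall
  have hmem : ∀ u v, s u v ∈ F u v := by
    intro u v; rw [hs u v]; rfl
  refine ⟨s, hmem, ?_, ?_, ?_⟩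
  · intro u v
    have h1 := hconvF u v
    rw [hs u v, hs v u, conv_singleton] at h1
    exact Set.singleton_eq_singleton_iff.1 h1
  · intro u
    have h1 := hdiagF u
    rw [hs u u] at h1
    exact Set.singleton_eq_singleton_iff.1 h1
  · intro u v w
    have h1 := hpcF u v w (hmem u v)
    rw [hs u w, hs w v] at h1
    exact comp_singleton_mem.1 h1

lemma ncard_two_le {X : RCC5Rel} {b : RCC5Basic} (hb : b ∈ X) (hX : ∀ c, X ≠ {c}) :
    2 ≤ X.ncard := by
  rcases Nat.lt_or_ge X.ncard 2 with h | h
  · interval_cases h' : X.ncard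
    · exact absurd (Set.ncard_eq_zero (X.toFinite) |>.1 h') (by
        intro he; rw [he] at hb; exact hb)
    · obtain ⟨c, hc⟩ := (Set.ncard_eq_one).1 h'
      exact absurd hc (hX c)
  · exact h

lemma exists_scenario (h𝒮 : IsDistributiveSubalgebra 𝒮) :
    ∀ (M : ℕ) (F : Fin n → Fin n → RCC5Rel),
    (∀ i j, F j i = RCC5Rel.conv (F i j)) → (∀ i, F i i = {RCC5Basic.EQ}) →
    (∀ i j, F i j ∈ 𝒮) → (∀ i j k, F i j ⊆ (F i k) ⋄ (F k j)) →
    (∀ i j, (F i j).Nonempty) → msize F ≤ M →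
    ∃ s : Fin n → Fin n → RCC5Basic, (∀ u v, s u v ∈ F u v) ∧
      (∀ u v, s v u = RCC5Basic.conv (s u v)) ∧ (∀ u, s u u = RCC5Basic.EQ) ∧
      (∀ u v w, tmem (s u w) (s w v) (s u v) = true) := by
  intro M
  induction M with
  | zero =>
    intro F hconvF hdiagF hoverF hpcF hneF hM
    by_cases hall : ∀ u v, ∃ b, F u v = {b}
    · exact scenario_of_singletons F hconvF hdiagF hpcF hall
    · exfalso
      push_neg at hall
      obtain ⟨u, v, huv⟩ := hall
      obtain ⟨b, hb⟩ := hneF u v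
      have h2 : 2 ≤ (F u v).ncard := ncard_two_le hb huv
      have h3 : (F u v).ncard ≤ msize F := by
        refine Finset.single_le_sum (f := fun p : Fin n × Fin n => (F p.1 p.2).ncard)
          (fun _ _ => Nat.zero_le _) (Finset.mem_univ (u, v))
      omega
  | succ M ih =>
    intro F hconvF hdiagF hoverF hpcF hneF hM
    by_cases hall : ∀ u v, ∃ b, F u v = {b}
    · exact scenario_of_singletons F hconvF hdiagF hpcF hall
    · push_neg at hall
      obtain ⟨u, v, huv⟩ := hall
      obtain ⟨β, hβ⟩ := hneF u v
      set F' := Upd F u v β with hF'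
      have hconv' := Upd_conv F hconvF u v β
      have hdiag' := Upd_diag F hconvF hdiagF hpcF u v β hβ
      have hover' := Upd_over h𝒮 F hconvF hoverF hpcF u v β hβ
      have hpc' : ∀ i j k, F' i j ⊆ (F' i k) ⋄ (F' k j) := fun i j k =>
        Upd_pc h𝒮 F hconvF hdiagF hoverF hpcF u v β hβ i j k
      have hne' := Upd_nonempty h𝒮 F hconvF hoverF hpcF u v β hβ
      have hsub : ∀ i j, F' i j ⊆ F i j := fun i j g hg => hg.1
      have hstrict : msize F' < msize F := by
        refine Finset.sum_lt_sum (fun p _ => Set.ncard_le_ncard (hsub p.1 p.2) (Set.toFinite _))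
          ⟨(u, v), Finset.mem_univ _, ?_⟩
        have hkl : F' u v = {β} := Upd_kl F hdiagF u v β hβ
        rw [hkl, Set.ncard_singleton]
        exact lt_of_lt_of_le Nat.one_lt_two (ncard_two_le hβ huv)
      obtain ⟨s, hs1, hs2, hs3, hs4⟩ := ih F' (fun i j => hconv' i j) (fun i => hdiag' i)
        (fun i j => hover' i j) hpc' (fun i j => hne' i j) (by omega)
      exact ⟨s, fun a b => hsub a b (hs1 a b), hs2, hs3, hs4⟩

lemma scenario_through (h𝒮 : IsDistributiveSubalgebra 𝒮)
    (F : Fin n → Fin n → RCC5Rel)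
    (hconvF : ∀ i j, F j i = RCC5Rel.conv (F i j))
    (hdiagF : ∀ i, F i i = {RCC5Basic.EQ})
    (hoverF : ∀ i j, F i j ∈ 𝒮)
    (hpcF : ∀ i j k, F i j ⊆ (F i k) ⋄ (F k j))
    (k l : Fin n) (β : RCC5Basic) (hβ : β ∈ F k l) :
    ∃ s : Fin n → Fin n → RCC5Basic, (∀ u v, s u v ∈ F u v) ∧ s k l = β ∧
      (∀ u v, s v u = RCC5Basic.conv (s u v)) ∧ (∀ u, s u u = RCC5Basic.EQ) ∧
      (∀ u v w, tmem (s u w) (s w v) (s u v) = true) := by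
  set F' := Upd F k l β with hF'
  have hconv' := Upd_conv F hconvF k l β
  have hdiag' := Upd_diag F hconvF hdiagF hpcF k l β hβ
  have hover' := Upd_over h𝒮 F hconvF hoverF hpcF k l β hβ
  have hpc' : ∀ i j m, F' i j ⊆ (F' i m) ⋄ (F' m j) := fun i j m =>
    Upd_pc h𝒮 F hconvF hdiagF hoverF hpcF k l β hβ i j m
  have hne' := Upd_nonempty h𝒮 F hconvF hoverF hpcF k l β hβ
  have hsub : ∀ i j, F' i j ⊆ F i j := fun i j g hg => hg.1
  obtain ⟨s, hs1, hs2, hs3, hs4⟩ := exists_scenario h𝒮 (msize F') F'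
    (fun i j => hconv' i j) (fun i => hdiag' i) (fun i j => hover' i j) hpc'
    (fun i j => hne' i j) le_rfl
  refine ⟨s, fun a b => hsub a b (hs1 a b), ?_, hs2, hs3, hs4⟩
  have := hs1 k l
  rw [show F' k l = {β} from Upd_kl F hdiagF k l β hβ] at this
  exact this

end Scenario


/-! ### construction of the a-closure by iterated local refinement -/

section Closure

local infixl:70 " ⋄ " => RCC5Rel.comp

variable {n : ℕ} {𝒮 : Set RCC5Rel}

/-- one refinement round along all paths -/
def nstep (F : Fin n → Fin n → RCC5Rel) (i j : Fin n) : RCC5Rel :=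
  (List.finRange n).foldr (fun w acc => ((F i w) ⋄ (F w j)) ∩ acc) (F i j)

/-- generic fold used in `nstep` -/
def fold1 (F : Fin n → Fin n → RCC5Rel) (i j : Fin n) (l : List (Fin n)) : RCC5Rel :=
  l.foldr (fun w acc => ((F i w) ⋄ (F w j)) ∩ acc) (F i j)

lemma nstep_eq_fold1 (F : Fin n → Fin n → RCC5Rel) (i j : Fin n) :
    nstep F i j = fold1 F i j (List.finRange n) := rfl

lemma fold1_subset_init (F : Fin n → Fin n → RCC5Rel) (i j : Fin n) (l : List (Fin n)) :
    fold1 F i j l ⊆ F i j := by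
  induction l with
  | nil => exact subset_rfl
  | cons w l ih => exact fun g hg => ih hg.2

lemma fold1_subset_comp (F : Fin n → Fin n → RCC5Rel) (i j : Fin n) {l : List (Fin n)}
    {w : Fin n} (hw : w ∈ l) : fold1 F i j l ⊆ (F i w) ⋄ (F w j) := by
  induction l with
  | nil => exact absurd hw List.not_mem_nil
  | cons u l ih =>
    rcases List.mem_cons.1 hw with h | h
    · subst h; exact fun g hg => hg.1
    · exact fun g hg => ih h hg.2

lemma fold1_lower (F : Fin n → Fin n → RCC5Rel) (i j : Fin n) (l : List (Fin n))
    {X : RCC5Rel} (h1 : X ⊆ F i j) (h2 : ∀ w ∈ l, X ⊆ (F i w) ⋄ (F w j)) :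
    X ⊆ fold1 F i j l := by
  induction l with
  | nil => exact h1
  | cons w l ih =>
    intro g hg
    exact ⟨h2 w List.mem_cons_self hg, ih (fun u hu => h2 u (List.mem_cons_of_mem w hu)) hg⟩

lemma fold1_conv (F : Fin n → Fin n → RCC5Rel)
    (hconvF : ∀ i j, F j i = RCC5Rel.conv (F i j)) (i j : Fin n) (l : List (Fin n)) :
    fold1 F j i l = RCC5Rel.conv (fold1 F i j l) := by
  induction l with
  | nil => exact hconvF i j
  | cons w l ih =>
    show ((F j w) ⋄ (F w i)) ∩ fold1 F j i l =
      RCC5Rel.conv (((F i w) ⋄ (F w j)) ∩ fold1 F i j l)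
    rw [ih, conv_inter, conv_comp, ← hconvF w j, ← hconvF i w]

lemma fold1_mem (h𝒮 : IsDistributiveSubalgebra 𝒮) (F : Fin n → Fin n → RCC5Rel)
    (hoverF : ∀ i j, F i j ∈ 𝒮) (i j : Fin n) (l : List (Fin n))
    {X : RCC5Rel} (hXne : X.Nonempty) (h1 : X ⊆ F i j)
    (h2 : ∀ w ∈ l, X ⊆ (F i w) ⋄ (F w j)) :
    fold1 F i j l ∈ 𝒮 := by
  induction l with
  | nil => exact hoverF i j
  | cons w l ih =>
    have hm : fold1 F i j l ∈ 𝒮 := ih (fun u hu => h2 u (List.mem_cons_of_mem w hu))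
    refine h𝒮.2.2.2.1 _ (h𝒮.2.2.1 _ (hoverF i w) _ (hoverF w j)) _ hm ?_
    obtain ⟨g, hg⟩ := hXne
    exact ⟨g, h2 w List.mem_cons_self hg,
      fold1_lower F i j l h1 (fun u hu => h2 u (List.mem_cons_of_mem w hu)) hg⟩

variable (Γ : RCC5Network n)

/-- the iterated refinement sequence starting from `Γ` -/
def nIter : ℕ → (Fin n → Fin n → RCC5Rel)
  | 0 => Γ.rel
  | m + 1 => nstep (nIter m)

variable {L : Fin n → Fin n → RCC5Rel}
  (hLsub : ∀ i j, L i j ⊆ Γ.rel i j)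
  (hLpc : ∀ i j w, L i j ⊆ (L i w) ⋄ (L w j))
  (hLne : ∀ i j, (L i j).Nonempty)
  (hLEQ : ∀ i, RCC5Basic.EQ ∈ L i i)
  (h𝒮 : IsDistributiveSubalgebra 𝒮) (hover : Γ.Over 𝒮)

include hLsub hLpc hLne hLEQ h𝒮 hover in
lemma nIter_props (m : ℕ) :
    (∀ i j, nIter Γ m j i = RCC5Rel.conv (nIter Γ m i j)) ∧
    (∀ i, nIter Γ m i i = {RCC5Basic.EQ}) ∧
    (∀ i j, nIter Γ m i j ∈ 𝒮) ∧
    (∀ i j, nIter Γ m i j ⊆ Γ.rel i j) ∧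
    (∀ i j, L i j ⊆ nIter Γ m i j) := by
  induction m with
  | zero => exact ⟨Γ.conv_rel, Γ.diag, hover, fun i j => subset_rfl, hLsub⟩
  | succ m ih =>
    obtain ⟨ihc, ihd, iho, ihr, ihL⟩ := ih
    have hlow : ∀ i j, L i j ⊆ fold1 (nIter Γ m) i j (List.finRange n) := by
      intro i j
      refine fold1_lower _ i j _ (ihL i j) (fun w _ => ?_)
      exact (hLpc i j w).trans (comp_mono (ihL i w) (ihL w j))
    refine ⟨?_, ?_, ?_, ?_, ?_⟩
    · intro i j
      exact fold1_conv (nIter Γ m) ihc i j (List.finRange n)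
    · intro i
      apply subset_antisymm
      · exact (fold1_subset_init _ i i _).trans (ihd i).subset
      · intro g hg
        have : g = RCC5Basic.EQ := hg
        rw [this]
        exact hlow i i (hLEQ i)
    · intro i j
      exact fold1_mem h𝒮 _ iho i j _ (hLne i j) (ihL i j)
        (fun w _ => (hLpc i j w).trans (comp_mono (ihL i w) (ihL w j)))
    · intro i j
      exact (fold1_subset_init _ i j _).trans (ihr i j)
    · exact hlow

lemma nIter_max (Γ' : RCC5Network n) (hpc' : Γ'.PathConsistent) (href : Γ'.Refines Γ) :
    ∀ m i j, Γ'.rel i j ⊆ nIter Γ m i j := by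
  intro m
  induction m with
  | zero => exact href
  | succ m ih =>
    intro i j
    refine fold1_lower _ i j _ (ih i j) (fun w _ => ?_)
    exact ((hpc' i j w).2).trans (comp_mono (ih i w) (ih w j))

lemma nIter_antitone (m : ℕ) (i j : Fin n) : nIter Γ (m + 1) i j ⊆ nIter Γ m i j :=
  fold1_subset_init _ i j _

lemma nIter_fix : ∃ m, ∀ i j, nIter Γ (m + 1) i j = nIter Γ m i j := by
  by_contra h
  push_neg at h
  have hdec : ∀ m, msize (nIter Γ (m + 1)) < msize (nIter Γ m) := by
    intro m
    obtain ⟨i, j, hij⟩ := h m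
    refine Finset.sum_lt_sum
      (fun p _ => Set.ncard_le_ncard (nIter_antitone Γ m p.1 p.2) (Set.toFinite _))
      ⟨(i, j), Finset.mem_univ _, ?_⟩
    exact Set.ncard_lt_ncard (ssubset_of_subset_of_ne (nIter_antitone Γ m i j) hij)
      (Set.toFinite _)
  have hmono : ∀ m, msize (nIter Γ m) + m ≤ msize (nIter Γ 0) := by
    intro m
    induction m with
    | zero => omega
    | succ m ih =>
      have := hdec m
      omega
  have := hmono (msize (nIter Γ 0) + 1)
  omega

include hLsub hLpc hLne hLEQ h𝒮 hover in
lemma exists_aclosure :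
    ∃ F : Fin n → Fin n → RCC5Rel,
      (∀ i j, F j i = RCC5Rel.conv (F i j)) ∧
      (∀ i, F i i = {RCC5Basic.EQ}) ∧
      (∀ i j, F i j ∈ 𝒮) ∧
      (∀ i j, F i j ⊆ Γ.rel i j) ∧
      (∀ i j, L i j ⊆ F i j) ∧
      (∀ i j, (F i j).Nonempty) ∧
      (∀ i j k, F i j ⊆ (F i k) ⋄ (F k j)) ∧
      (∀ Γ' : RCC5Network n, Γ'.PathConsistent → Γ'.Refines Γ → ∀ i j, Γ'.rel i j ⊆ F i j) := by
  obtain ⟨m, hm⟩ := nIter_fix Γ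
  obtain ⟨hc, hd, ho, hr, hL⟩ := nIter_props Γ hLsub hLpc hLne hLEQ h𝒮 hover m
  refine ⟨nIter Γ m, hc, hd, ho, hr, hL, ?_, ?_, ?_⟩
  · intro i j
    exact (hLne i j).mono (hL i j)
  · intro i j k
    have h1 : nIter Γ (m + 1) i j ⊆ (nIter Γ m i k) ⋄ (nIter Γ m k j) :=
      fold1_subset_comp _ i j (List.mem_finRange k)
    rw [hm i j] at h1
    exact h1
  · intro Γ' hpc' href
    exact nIter_max Γ Γ' hpc' href m

end Closure


/-! ### the minimal network -/

section MinNet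

variable {n : ℕ} (Γ : RCC5Network n)

/-- the set of feasible basic relations between `v_i` and `v_j` -/
def minRel (i j : Fin n) : RCC5Rel :=
  {α : RCC5Basic | ∃ a, Γ.IsSolution a ∧ RCC5Basic.interp α (a i) (a j)}

lemma minRel_sub (i j : Fin n) : minRel Γ i j ⊆ Γ.rel i j := by
  rintro α ⟨a, ha, hi⟩
  obtain ⟨b, hb, hbi⟩ := ha i j
  rwa [interp_unique hi hbi]

lemma minRel_pc (i j w : Fin n) :
    minRel Γ i j ⊆ RCC5Rel.comp (minRel Γ i w) (minRel Γ w j) := by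
  rintro α ⟨a, ha, hi⟩
  exact ⟨a i, a j, hi, a w,
    ⟨relOf (a i) (a w), ⟨a, ha, interp_relOf _ _⟩, interp_relOf _ _⟩,
    ⟨relOf (a w) (a j), ⟨a, ha, interp_relOf _ _⟩, interp_relOf _ _⟩⟩

lemma minRel_ne (hcons : Γ.Consistent) (i j : Fin n) : (minRel Γ i j).Nonempty := by
  obtain ⟨a, ha⟩ := hcons
  exact ⟨relOf (a i) (a j), a, ha, interp_relOf _ _⟩

lemma minRel_EQ (hcons : Γ.Consistent) (i : Fin n) : RCC5Basic.EQ ∈ minRel Γ i i := by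
  obtain ⟨a, ha⟩ := hcons
  exact ⟨a, ha, rfl⟩

lemma minRel_conv (i j : Fin n) : minRel Γ j i = RCC5Rel.conv (minRel Γ i j) := by
  ext α
  rw [mem_conv]
  constructor
  · rintro ⟨a, ha, hi⟩
    exact ⟨a, ha, interp_conv hi⟩
  · rintro ⟨a, ha, hi⟩
    have h2 := interp_conv hi
    rw [conv_conv] at h2
    exact ⟨a, ha, h2⟩

lemma minRel_diag (hcons : Γ.Consistent) (i : Fin n) :
    minRel Γ i i = {RCC5Basic.EQ} := by
  apply subset_antisymm
  · rintro α ⟨a, ha, hi⟩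
    have : α = RCC5Basic.EQ :=
      interp_unique hi (show RCC5Basic.interp RCC5Basic.EQ (a i) (a i) from rfl)
    exact this
  · intro α hα
    have : α = RCC5Basic.EQ := hα
    rw [this]
    exact minRel_EQ Γ hcons i

/-- the minimal network, as a network -/
def minNet (hcons : Γ.Consistent) : RCC5Network n where
  rel := minRel Γ
  conv_rel := minRel_conv Γ
  diag := minRel_diag Γ hcons

lemma minNet_pc (hcons : Γ.Consistent) : (minNet Γ hcons).PathConsistent :=
  fun i j k => ⟨minRel_ne Γ hcons i j, minRel_pc Γ i j k⟩

lemma minNet_refines (hcons : Γ.Consistent) : (minNet Γ hcons).Refines Γ :=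
  minRel_sub Γ

end MinNet

end Aux

/-- For a consistent RCC5 network over a distributive subalgebra, the a-closure is the
minimal network: each `S_ij` (`i ≠ j`) is exactly the set of feasible basic relations. -/
theorem aclosure_is_minimal_network {n : ℕ} (𝒮 : Set RCC5Rel)
    (h𝒮 : IsDistributiveSubalgebra 𝒮) (Γ : RCC5Network n) (hover : Γ.Over 𝒮)
    (hcons : Γ.Consistent) (Γp : RCC5Network n) (hacl : Γp.IsAClosure Γ) :
    ∀ i j, i ≠ j →
      Γp.rel i j =
        {α : RCC5Basic | ∃ a, Γ.IsSolution a ∧ RCC5Basic.interp α (a i) (a j)} := by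
  intro i j _
  obtain ⟨F, hc, hd, ho, hr, hL, hne, hpc, hmax⟩ :=
    Aux.exists_aclosure Γ (Aux.minRel_sub Γ) (Aux.minRel_pc Γ) (Aux.minRel_ne Γ hcons)
      (Aux.minRel_EQ Γ hcons) h𝒮 hover
  set FN : RCC5Network n := ⟨F, hc, hd⟩ with hFN
  have hFpc : FN.PathConsistent := fun u v w => ⟨hne u v, hpc u v w⟩
  have h1 : ∀ u v, Γp.rel u v ⊆ F u v := hmax Γp hacl.1 hacl.2.1
  have h2 : FN.Refines Γp := hacl.2.2 FN hFpc hr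
  apply subset_antisymm
  · intro α hα
    obtain ⟨s, hs1, hs2, hs3, hs4, hs5⟩ :=
      Aux.scenario_through h𝒮 F hc hd ho hpc i j α (h1 i j hα)
    obtain ⟨a, ha⟩ := Aux.scenario_realizable s hs3 hs4 hs5
    refine ⟨a, fun u v => ⟨s u v, hr u v (hs1 u v), ha u v⟩, ?_⟩
    rw [← hs2]
    exact ha i j
  · intro α hα
    exact hacl.2.2 (Aux.minNet Γ hcons) (Aux.minNet_pc Γ hcons) (Aux.minNet_refines Γ hcons) i j hα
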